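/- Let D ⊂ ℝⁿ be a bounded smooth domain and suppose g : D̄ × ℝ → ℝ is continuous and bounded, with finite uniform limits g(x, ±∞) = lim_{u→±∞} g(x,u), and g(x,-∞) < g(x,u) < g(x,∞) for all x ∈ D and u ∈ ℝ. If there exist u ∈ W^{2,2}(D) and b ∈ ℝ solving Δu + g(x,u) = p(x) in D with u = b on ∂D and ∫_{∂D} ∂u/∂n ds = 0, then the mean value μ₀ = (1/|D|) ∫_D p dx satisfies (1/|D|) ∫_D g(x,-∞) dx < μ₀ < (1/|D|) ∫_D g(x,∞) dx. -/

import Mathlib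

/-
The zero-flux condition makes the divergence theorem, applied to `∇u`, give `∫_D Δu = 0`, so
integrating the equation over `D` yields `∫_D g(x, u(x)) dx = ∫_D p dx`. Integrating the strict
pointwise bounds `g(x, -∞) < g(x, u(x)) < g(x, ∞)` over the set `D` of positive finite measure
makes them strict inequalities between integrals.
-/

open MeasureTheory Real

noncomputable def lap {n : ℕ} (u : EuclideanSpace ℝ (Fin n) → ℝ)
    (x : EuclideanSpace ℝ (Fin n)) : ℝ :=
  ∑ i : Fin n, iteratedFDeriv ℝ 2 u x ![EuclideanSpace.single i 1, EuclideanSpace.single i 1]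

noncomputable def divg {n : ℕ} (Φ : EuclideanSpace ℝ (Fin n) → EuclideanSpace ℝ (Fin n))
    (x : EuclideanSpace ℝ (Fin n)) : ℝ :=
  ∑ i : Fin n, (inner ℝ (EuclideanSpace.single i 1) (fderiv ℝ Φ x (EuclideanSpace.single i 1)) : ℝ)

section Gradient

variable {E : Type*} [NormedAddCommGroup E] [InnerProductSpace ℝ E] [CompleteSpace E]
  {u : E → ℝ}

theorem ContDiff.gradient {k : WithTop ℕ∞} (hu : ContDiff ℝ (k + 1) u) :
    ContDiff ℝ k (gradient u) :=
  (InnerProductSpace.toDual ℝ E).symm.contDiff.comp (hu.fderiv_right le_rfl)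

theorem inner_fderiv_gradient_apply (hu : ContDiff ℝ 2 u) (x v : E) :
    inner ℝ v (fderiv ℝ (gradient u) x v) = fderiv ℝ (fderiv ℝ u) x v v := by
  have hgrad : DifferentiableAt ℝ (gradient u) x :=
    ((ContDiff.gradient (k := 1) hu).differentiable one_ne_zero).differentiableAt
  have hfderiv : DifferentiableAt ℝ (fderiv ℝ u) x :=
    ((hu.fderiv_right (m := 1) le_rfl).differentiable one_ne_zero).differentiableAt
  have hpartial : (fun y => inner ℝ v (gradient u y)) = fun y => fderiv ℝ u y v := by
    funext y
    simp [inner_gradient_right]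
  have := congrArg (fun f => fderiv ℝ f x v) hpartial
  simp only [fderiv_inner_apply ℝ (differentiableAt_const v) hgrad, fderiv_clm_apply hfderiv
    (differentiableAt_const v)] at this
  simpa using this

end Gradient

theorem divg_gradient {n : ℕ} {u : EuclideanSpace ℝ (Fin n) → ℝ} (hu : ContDiff ℝ 2 u) :
    divg (gradient u) = lap u := by
  funext x
  refine Finset.sum_congr rfl fun i _ => ?_
  rw [inner_fderiv_gradient_apply hu, iteratedFDeriv_two_apply]
  simp

theorem continuous_lap {n : ℕ} {u : EuclideanSpace ℝ (Fin n) → ℝ} (hu : ContDiff ℝ 2 u) :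
    Continuous (lap u) :=
  continuous_finsetSum _ fun i _ =>
    (ContinuousMultilinearMap.apply ℝ (fun _ : Fin 2 => EuclideanSpace ℝ (Fin n)) ℝ
      ![EuclideanSpace.single i 1, EuclideanSpace.single i 1]).continuous.comp
      (hu.continuous_iteratedFDeriv le_rfl)

theorem setIntegral_lt_setIntegral {X : Type*} [MeasurableSpace X] {μ : Measure X} {s : Set X}
    (hs : MeasurableSet s) (hμs : μ s ≠ 0) {f h : X → ℝ} (hf : IntegrableOn f s μ)
    (hh : IntegrableOn h s μ) (hlt : ∀ x ∈ s, f x < h x) :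
    ∫ x in s, f x ∂μ < ∫ x in s, h x ∂μ := by
  rw [← sub_pos, ← integral_sub hh hf]
  have hnonneg : 0 ≤ᵐ[μ.restrict s] fun x => h x - f x := by
    filter_upwards [ae_restrict_mem hs] with x hx
    exact sub_nonneg.mpr (hlt x hx).le
  rw [setIntegral_pos_iff_support_of_nonneg_ae hnonneg (hh.sub hf)]
  have : Function.support (fun x => h x - f x) ∩ s = s :=
    Set.inter_eq_right.mpr fun x hx => sub_ne_zero.mpr (hlt x hx).ne'
  rw [this]
  exact pos_iff_ne_zero.mpr hμs

theorem necessary_condition_general {n : ℕ}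
    (D : Set (EuclideanSpace ℝ (Fin n)))
    (hD : IsOpen D) (hDb : Bornology.IsBounded D) (hDne : D.Nonempty)
    (σ : Measure (EuclideanSpace ℝ (Fin n)))
    (ν : EuclideanSpace ℝ (Fin n) → EuclideanSpace ℝ (Fin n))
    (hdiv : ∀ Φ : EuclideanSpace ℝ (Fin n) → EuclideanSpace ℝ (Fin n), ContDiff ℝ 1 Φ →
      (∫ x in D, divg Φ x) = ∫ x in frontier D, (inner ℝ (Φ x) (ν x) : ℝ) ∂σ)
    (g : EuclideanSpace ℝ (Fin n) → ℝ → ℝ)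
    (gp gm : EuclideanSpace ℝ (Fin n) → ℝ)
    (hgpInt : IntegrableOn gp D volume) (hgmInt : IntegrableOn gm D volume)
    (hstrict : ∀ x ∈ D, ∀ u : ℝ, gm x < g x u ∧ g x u < gp x)
    (p : EuclideanSpace ℝ (Fin n) → ℝ) (hpInt : IntegrableOn p D volume)
    (u : EuclideanSpace ℝ (Fin n) → ℝ)
    (hu : ContDiff ℝ 2 u)
    (heq : ∀ x ∈ D, lap u x + g x (u x) = p x)
    (hflux : (∫ x in frontier D, (inner ℝ (gradient u x) (ν x) : ℝ) ∂σ) = 0) :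
    ((volume D).toReal)⁻¹ * ∫ x in D, gm x < ((volume D).toReal)⁻¹ * ∫ x in D, p x ∧
      ((volume D).toReal)⁻¹ * ∫ x in D, p x < ((volume D).toReal)⁻¹ * ∫ x in D, gp x := by
  have hDm : MeasurableSet D := hD.measurableSet
  have hvol : volume D ≠ 0 := (hD.measure_pos volume hDne).ne'
  have hlap : ∫ x in D, lap u x = 0 := by
    rw [← divg_gradient hu, hdiv _ (hu.gradient (k := 1)), hflux]
  have hlapInt : IntegrableOn (lap u) D :=
    ((continuous_lap hu).continuousOn.integrableOn_compact hDb.isCompact_closure).mono_set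
      subset_closure
  have hguInt : IntegrableOn (fun x => g x (u x)) D :=
    (hpInt.sub hlapInt).congr_fun (fun x hx => by simp [← heq x hx]) hDm
  have hmean : ∫ x in D, g x (u x) = ∫ x in D, p x := by
    rw [← setIntegral_congr_fun hDm heq, integral_add hlapInt hguInt, hlap, zero_add]
  have hinv : 0 < ((volume D).toReal)⁻¹ :=
    inv_pos.2 (ENNReal.toReal_pos hvol hDb.measure_lt_top.ne)
  rw [← hmean]
  exact ⟨mul_lt_mul_of_pos_left (setIntegral_lt_setIntegral hDm hvol hgmInt hguInt
      fun x hx => (hstrict x hx (u x)).1) hinv,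
    mul_lt_mul_of_pos_left (setIntegral_lt_setIntegral hDm hvol hguInt hgpInt
      fun x hx => (hstrict x hx (u x)).2) hinv⟩

/-- Necessary condition of Landesman–Lazer type: if the free boundary problem
Δu + g(x,u) = p(x), u|∂D = b, zero boundary flux, has a solution, then the mean
value μ₀ of p lies strictly between the averages of g(x,-∞) and g(x,∞). -/
theorem necessary_condition {n : ℕ} (hn : 0 < n)
    (D : Set (EuclideanSpace ℝ (Fin n)))
    (hD : IsOpen D) (hDb : Bornology.IsBounded D) (hDne : D.Nonempty)
    (σ : Measure (EuclideanSpace ℝ (Fin n)))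
    (ν : EuclideanSpace ℝ (Fin n) → EuclideanSpace ℝ (Fin n))
    (hdiv : ∀ Φ : EuclideanSpace ℝ (Fin n) → EuclideanSpace ℝ (Fin n), ContDiff ℝ 1 Φ →
      (∫ x in D, divg Φ x) = ∫ x in frontier D, (inner ℝ (Φ x) (ν x) : ℝ) ∂σ)
    (g : EuclideanSpace ℝ (Fin n) → ℝ → ℝ)
    (hgc : Continuous fun q : (EuclideanSpace ℝ (Fin n)) × ℝ => g q.1 q.2)
    (hgb : ∃ C, ∀ x u, |g x u| ≤ C)
    (gp gm : EuclideanSpace ℝ (Fin n) → ℝ)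
    (hgpInt : IntegrableOn gp D volume) (hgmInt : IntegrableOn gm D volume)
    (hlimp : ∀ ε > 0, ∃ R : ℝ, ∀ x ∈ closure D, ∀ u ≥ R, |g x u - gp x| < ε)
    (hlimm : ∀ ε > 0, ∃ R : ℝ, ∀ x ∈ closure D, ∀ u ≤ R, |g x u - gm x| < ε)
    (hstrict : ∀ x ∈ D, ∀ u : ℝ, gm x < g x u ∧ g x u < gp x)
    (p : EuclideanSpace ℝ (Fin n) → ℝ) (hpInt : IntegrableOn p D volume)
    (u : EuclideanSpace ℝ (Fin n) → ℝ) (b : ℝ)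
    (hu : ContDiff ℝ 2 u)
    (heq : ∀ x ∈ D, lap u x + g x (u x) = p x)
    (hb : ∀ x ∈ frontier D, u x = b)
    (hflux : (∫ x in frontier D, (inner ℝ (gradient u x) (ν x) : ℝ) ∂σ) = 0) :
    ((volume D).toReal)⁻¹ * ∫ x in D, gm x < ((volume D).toReal)⁻¹ * ∫ x in D, p x ∧
      ((volume D).toReal)⁻¹ * ∫ x in D, p x < ((volume D).toReal)⁻¹ * ∫ x in D, gp x :=
  necessary_condition_general D hD hDb hDne σ ν hdiv g gp gm hgpInt hgmInt hstrict p hpInt u hu heq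
    hflux
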